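/- For every n, every weakly rainbow-stable 2-bounded coloring f : [ℕ]² → ℕ, and every finite increasing string σ that is a finite prerainbow for f (no two entries eventually share colors), there are at most |σ| natural numbers x such that appending x to σ destroys the prerainbow property; hence σ has infinitely many one-point prerainbow extensions. -/

import Mathlib

/-!
A colour class of a 2-bounded colouring holds at most two pairs, so the column of `y` can agree
eventually with the column of at most one `x ≠ y`: otherwise, for large `s`, the three pairs
`{y, s}`, `{x₁, s}`, `{x₂, s}` would share a colour. Hence every entry of `σ` rules out at most one
extension. Every other `x` above `max σ` extends `σ`, because weak rainbow-stability turns "not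
eventually equal" into "eventually different".
-/

open Classical Filter

section Coloring

variable {γ : Type*} (f : Sym2 ℕ → γ)

def EventuallySameColor (y x : ℕ) : Prop :=
  ∀ᶠ s in atTop, f s(y, s) = f s(x, s)

def IsPrerainbow (σ : List ℕ) : Prop :=
  ∀ a ∈ σ, ∀ b ∈ σ, a ≠ b → ∀ᶠ s in atTop, f s(a, s) ≠ f s(b, s)

theorem eq_of_eventuallySameColor
    (h2b : ∀ c, {p : Sym2 ℕ | ¬ p.IsDiag ∧ f p = c}.encard ≤ 2)
    {y x₁ x₂ : ℕ} (hy₁ : y ≠ x₁) (hy₂ : y ≠ x₂)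
    (h₁ : EventuallySameColor f y x₁) (h₂ : EventuallySameColor f y x₂) : x₁ = x₂ := by
  by_contra hne
  obtain ⟨s, hs₁, hs₂, hys, hx₁s, hx₂s⟩ := (h₁.and <| h₂.and <| (eventually_gt_atTop y).and <|
    (eventually_gt_atTop x₁).and (eventually_gt_atTop x₂)).exists
  have hthree : ({s(y, s), s(x₁, s), s(x₂, s)} : Set (Sym2 ℕ)).encard = 3 :=
    Set.encard_eq_three.2 ⟨_, _, _, by simp; omega, by simp; omega, by simp; omega, rfl⟩
  have hsub : {s(y, s), s(x₁, s), s(x₂, s)} ⊆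
      {p : Sym2 ℕ | ¬ p.IsDiag ∧ f p = f s(y, s)} := by
    rintro p (rfl | rfl | rfl) <;> exact ⟨by simp; omega, by simp only [← hs₁, ← hs₂]⟩
  have := hthree ▸ (Set.encard_mono hsub).trans (h2b _)
  norm_num at this

theorem IsPrerainbow.append_singleton {σ : List ℕ} {x : ℕ} (hσ : IsPrerainbow f σ)
    (hx : ∀ y ∈ σ, y ≠ x → ∀ᶠ s in atTop, f s(y, s) ≠ f s(x, s)) :
    IsPrerainbow f (σ ++ [x]) := by
  intro a ha b hb hab
  simp only [List.mem_append, List.mem_singleton] at ha hb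
  rcases ha with ha | rfl <;> rcases hb with hb | rfl
  · exact hσ a ha b hb hab
  · exact hx a ha hab
  · exact (hx b hb hab.symm).mono fun _ h => Ne.symm h
  · exact absurd rfl hab

end Coloring

theorem encard_setOf_exists_mem_le_length {α : Type*} (R : α → α → Prop)
    (hR : ∀ y x₁ x₂, R y x₁ → R y x₂ → x₁ = x₂) (σ : List α) :
    {x | ∃ y ∈ σ, R y x}.encard ≤ σ.length := by
  induction σ with
  | nil => simp
  | cons y σ ih =>
    have hy : {x | R y x}.encard ≤ 1 := Set.encard_le_one_iff.2 fun _ _ => hR y _ _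
    calc {x | ∃ z ∈ y :: σ, R z x}.encard
        = ({x | R y x} ∪ {x | ∃ z ∈ σ, R z x}).encard := by
          simp only [List.mem_cons, exists_eq_or_imp, Set.ofPred_or]
      _ ≤ 1 + σ.length := (Set.encard_union_le _ _).trans (add_le_add hy ih)
      _ = (y :: σ).length := by rw [List.length_cons, Nat.cast_succ, add_comm]

theorem stmt18 (f : Sym2 ℕ → ℕ)
    (h2b : ∀ c : ℕ, {p : Sym2 ℕ | ¬ p.IsDiag ∧ f p = c}.encard ≤ 2)
    (hws : ∀ x y : ℕ,
      (∀ᶠ s in atTop, f (Sym2.mk x s) = f (Sym2.mk y s)) ∨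
      (∀ᶠ s in atTop, f (Sym2.mk x s) ≠ f (Sym2.mk y s)))
    (σ : List ℕ) (hσ : List.Pairwise (· < ·) σ)
    (hpre : ∀ x ∈ σ, ∀ y ∈ σ, x ≠ y →
      ∀ᶠ s in atTop, f (Sym2.mk x s) ≠ f (Sym2.mk y s)) :
    {x : ℕ | ∃ y ∈ σ, y ≠ x ∧
      ∀ᶠ s in atTop, f (Sym2.mk y s) = f (Sym2.mk x s)}.encard
        ≤ (σ.length : ℕ∞) ∧
    {x : ℕ | List.Pairwise (· < ·) (σ ++ [x]) ∧
      ∀ a ∈ σ ++ [x], ∀ b ∈ σ ++ [x], a ≠ b →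
        ∀ᶠ s in atTop, f (Sym2.mk a s) ≠ f (Sym2.mk b s)}.Infinite := by
  set bad := {x : ℕ | ∃ y ∈ σ, y ≠ x ∧ EventuallySameColor f y x}
  have hbad : bad.encard ≤ σ.length := encard_setOf_exists_mem_le_length _
    (fun _ _ _ h₁ h₂ => eq_of_eventuallySameColor f h2b h₁.1 h₂.1 h₁.2 h₂.2) σ
  refine ⟨hbad, Nat.frequently_atTop_iff_infinite.1 (Eventually.frequently ?_)⟩
  have hgood : ∀ᶠ x in atTop, x ∉ bad :=
    Nat.cofinite_eq_atTop ▸ (Set.finite_of_encard_le_coe hbad).eventually_cofinite_notMem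
  have hlarge : ∀ᶠ x in atTop, ∀ y ∈ σ, y < x :=
    (eventually_all_finite σ.finite_toSet).2 fun y _ => eventually_gt_atTop y
  filter_upwards [hgood, hlarge] with x hx hσx
  refine ⟨List.pairwise_append.2 ⟨hσ, List.pairwise_singleton _ _, by simpa using hσx⟩, ?_⟩
  exact IsPrerainbow.append_singleton f hpre
    fun y hy hyx => (hws y x).resolve_left fun h => hx ⟨y, hy, hyx, h⟩
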